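/- For a bounded linear operator T on a complex Hilbert space with P = T*T + TT*, w(T)⁴ ≥ (1/4)C(T²)² + (1/8)m(T²P + PT²) + (1/16)‖P‖², where C(S) = inf over unit vectors x and real φ of ‖Re(e^{iφ}S)x‖ and m(S) = inf{|⟨Sx,x⟩| : ‖x‖ = 1} is the Crawford number. -/

import Mathlib

/-!
For real `θ`, `K = Re(e^{iθ}T)` is self-adjoint, so `‖K‖ ≤ w(T)`, and
`K² = ½ Re(e^{2iθ}T²) + ¼ P`. Expanding `‖K²x‖²` for a unit vector `x` gives
`¼‖Re(e^{2iθ}T²)x‖² + ⅛ Re(e^{-2iθ}⟨(T²P + PT²)x, x⟩) + 1/16 ‖Px‖²`, and choosing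
`2θ = arg ⟨(T²P + PT²)x, x⟩` turns the middle term into `⅛ |⟨(T²P + PT²)x, x⟩|`.
Since `‖K²x‖² ≤ w(T)⁴`, bounding the first two terms below by `C(T²)²` and `m(T²P + PT²)` and
taking the supremum over `x` in the last one yields the inequality.
-/

open Complex

variable {H : Type*} [NormedAddCommGroup H] [InnerProductSpace ℂ H] [CompleteSpace H]

/-- The numerical radius `w(T) = sup {|⟨Tx,x⟩| : ‖x‖ = 1}`. -/
noncomputable def numRadius (T : H →L[ℂ] H) : ℝ :=
  sSup {r : ℝ | ∃ x : H, ‖x‖ = 1 ∧ r = ‖(inner ℂ (T x) x : ℂ)‖}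

/-- The Crawford number `m(T) = inf {|⟨Tx,x⟩| : ‖x‖ = 1}`. -/
noncomputable def crawford (T : H →L[ℂ] H) : ℝ :=
  sInf {r : ℝ | ∃ x : H, ‖x‖ = 1 ∧ r = ‖(inner ℂ (T x) x : ℂ)‖}

/-- The real part `Re(T) = (T + T*)/2`. -/
noncomputable def reOp (T : H →L[ℂ] H) : H →L[ℂ] H := (2 : ℂ)⁻¹ • (T + star T)

/-- The imaginary part `Im(T) = (T - T*)/(2i)`. -/
noncomputable def imOp (T : H →L[ℂ] H) : H →L[ℂ] H := (2 * Complex.I)⁻¹ • (T - star T)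

/-- `C(S) = inf over unit vectors x and φ ∈ ℝ of ‖Re(e^{iφ}S)x‖`. -/
noncomputable def lowerC (S : H →L[ℂ] H) : ℝ :=
  sInf {r : ℝ | ∃ (x : H) (φ : ℝ), ‖x‖ = 1 ∧
    r = ‖reOp (Complex.exp (φ * Complex.I) • S) x‖}


open ComplexConjugate ContinuousLinearMap

local notation "⟪" x ", " y "⟫" => @inner ℂ _ _ x y

theorem ContinuousLinearMap.sq_opNorm_le_of_unit_norm_sq {𝕜 E F : Type*} [RCLike 𝕜]
    [NormedAddCommGroup E] [NormedSpace 𝕜 E] [NormedSpace ℝ E] [Nontrivial E]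
    [NormedAddCommGroup F] [NormedSpace 𝕜 F] {f : E →L[𝕜] F} {C : ℝ}
    (hf : ∀ x, ‖x‖ = 1 → ‖f x‖ ^ 2 ≤ C) : ‖f‖ ^ 2 ≤ C := by
  obtain ⟨u, hu⟩ := exists_norm_eq E zero_le_one
  have hC : 0 ≤ C := (sq_nonneg _).trans (hf u hu)
  have hf' : ‖f‖ ≤ √C := f.opNorm_le_of_unit_norm (Real.sqrt_nonneg C) fun x hx =>
    Real.le_sqrt_of_sq_le (hf x hx)
  calc ‖f‖ ^ 2 ≤ √C ^ 2 := by gcongr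
    _ = C := Real.sq_sqrt hC

theorem IsSelfAdjoint.norm_le_of_abs_re_inner_le {𝕜 E : Type*} [RCLike 𝕜]
    [NormedAddCommGroup E] [InnerProductSpace 𝕜 E] [CompleteSpace E] {A : E →L[𝕜] E}
    (hA : IsSelfAdjoint A) {C : ℝ} (hC : 0 ≤ C)
    (h : ∀ x, ‖x‖ = 1 → |RCLike.re (inner 𝕜 (A x) x)| ≤ C) : ‖A‖ ≤ C := by
  rw [A.norm_eq_iSup_rayleighQuotient hA.isSymmetric]
  refine ciSup_le fun x => ?_
  rcases eq_or_ne x 0 with rfl | hx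
  · simpa using hC
  have hx' : (‖x‖⁻¹ : 𝕜) ≠ 0 := by simpa using hx
  have hu : ‖(‖x‖⁻¹ : 𝕜) • x‖ = 1 := by simp [norm_smul, hx]
  rw [← A.rayleigh_smul x hx', rayleighQuotient, hu, reApplyInnerSelf_apply]
  simpa using h _ hu

lemma conj_exp_arg_mul_I_mul_self (z : ℂ) : conj (exp (z.arg * I)) * z = ‖z‖ :=
  calc conj (exp (z.arg * I)) * z = ‖z‖ * (conj (exp (z.arg * I)) * exp (z.arg * I)) := by
        nth_rw 2 [← norm_mul_exp_arg_mul_I z]; ring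
    _ = ‖z‖ := by rw [Complex.conj_mul', norm_exp_ofReal_mul_I]; simp

section

variable {E : Type*} [NormedAddCommGroup E] [InnerProductSpace ℂ E]

lemma norm_inner_le_numRadius (T : E →L[ℂ] E) {x : E} (hx : ‖x‖ = 1) :
    ‖⟪T x, x⟫‖ ≤ numRadius T := by
  refine le_csSup ⟨‖T‖, ?_⟩ ⟨x, hx, rfl⟩
  rintro _ ⟨y, hy, rfl⟩
  simpa [hy] using (norm_inner_le_norm (𝕜 := ℂ) (T y) y).trans
    (mul_le_mul_of_nonneg_right (T.le_opNorm y) (norm_nonneg y))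

lemma numRadius_nonneg (T : E →L[ℂ] E) : 0 ≤ numRadius T :=
  Real.sSup_nonneg fun _ ⟨_, _, hr⟩ => hr ▸ norm_nonneg _

lemma crawford_le_norm_inner (S : E →L[ℂ] E) {x : E} (hx : ‖x‖ = 1) :
    crawford S ≤ ‖⟪S x, x⟫‖ :=
  csInf_le ⟨0, fun _ ⟨_, _, hr⟩ => hr ▸ norm_nonneg _⟩ ⟨x, hx, rfl⟩

variable [CompleteSpace E]

lemma lowerC_le_norm_reOp (S : E →L[ℂ] E) {x : E} (hx : ‖x‖ = 1) (φ : ℝ) :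
    lowerC S ≤ ‖reOp (exp (φ * I) • S) x‖ :=
  csInf_le ⟨0, fun _ ⟨_, _, _, hr⟩ => hr ▸ norm_nonneg _⟩ ⟨x, φ, hx, rfl⟩

lemma lowerC_nonneg (S : E →L[ℂ] E) : 0 ≤ lowerC S :=
  Real.sInf_nonneg fun _ ⟨_, _, _, hr⟩ => hr ▸ norm_nonneg _

lemma isSelfAdjoint_reOp (S : E →L[ℂ] E) : IsSelfAdjoint (reOp S) := by
  simp [IsSelfAdjoint, reOp, star_smul, add_comm]

lemma re_inner_reOp_apply (A : E →L[ℂ] E) (x y : E) :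
    re ⟪reOp A x, y⟫ = (re ⟪A x, y⟫ + re ⟪x, A y⟫) / 2 := by
  rw [reOp, smul_apply, add_apply, inner_smul_left, inner_add_left, star_eq_adjoint,
    adjoint_inner_left, map_inv₀, map_ofNat, inv_mul_eq_div, div_ofNat_re, add_re]

lemma re_inner_reOp_apply_self (S : E →L[ℂ] E) (x : E) :
    re ⟪reOp S x, x⟫ = re ⟪S x, x⟫ := by
  have hsymm : re ⟪x, S x⟫ = re ⟪S x, x⟫ := inner_re_symm (𝕜 := ℂ) x (S x)
  rw [re_inner_reOp_apply, hsymm]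
  ring

lemma re_inner_reOp_apply_apply (A : E →L[ℂ] E) {B : E →L[ℂ] E} (hB : IsSelfAdjoint B) (x : E) :
    re ⟪reOp A x, B x⟫ = re ⟪(A * B + B * A) x, x⟫ / 2 := by
  have hBA : ⟪A x, B x⟫ = ⟪(B * A) x, x⟫ := (hB.isSymmetric (A x) x).symm
  have hAB : re ⟪x, A (B x)⟫ = re ⟪(A * B) x, x⟫ := inner_re_symm (𝕜 := ℂ) x _
  rw [re_inner_reOp_apply, hBA, hAB, add_apply, inner_add_left, add_re, add_comm]

lemma norm_reOp_smul_le_numRadius (T : E →L[ℂ] E) {c : ℂ} (hc : ‖c‖ = 1) :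
    ‖reOp (c • T)‖ ≤ numRadius T := by
  refine (isSelfAdjoint_reOp _).norm_le_of_abs_re_inner_le (numRadius_nonneg T) fun x hx => ?_
  calc |re ⟪reOp (c • T) x, x⟫| = |re (conj c * ⟪T x, x⟫)| := by
        rw [re_inner_reOp_apply_self, smul_apply, inner_smul_left]
    _ ≤ ‖⟪T x, x⟫‖ := by simpa [hc] using abs_re_le_norm (conj c * ⟪T x, x⟫)
    _ ≤ numRadius T := norm_inner_le_numRadius T hx

lemma reOp_smul_mul_self (T : E →L[ℂ] E) {c : ℂ} (hc : ‖c‖ = 1) :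
    reOp (c • T) * reOp (c • T) =
      (2 : ℂ)⁻¹ • reOp (c ^ 2 • T ^ 2) + (4 : ℂ)⁻¹ • (star T * T + T * star T) := by
  have hc₀ : c ≠ 0 := by rintro rfl; simp at hc
  have hc' : conj c = c⁻¹ := by simp [Complex.inv_def, Complex.normSq_eq_norm_sq, hc]
  simp only [reOp, star_smul, star_mul, Complex.star_def, hc', smul_add,
    add_mul, mul_add, smul_mul_smul_comm, smul_smul, pow_two]
  match_scalars <;> field_simp <;> ring

lemma isSelfAdjoint_star_mul_self_add_mul_star (T : E →L[ℂ] E) :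
    IsSelfAdjoint (star T * T + T * star T) :=
  (IsSelfAdjoint.star_mul_self T).add (IsSelfAdjoint.mul_star_self T)

lemma norm_reOp_smul_mul_self_apply_sq (T : E →L[ℂ] E) {c : ℂ} (hc : ‖c‖ = 1) (x : E) :
    ‖(reOp (c • T) * reOp (c • T)) x‖ ^ 2 =
      ‖reOp (c ^ 2 • T ^ 2) x‖ ^ 2 / 4
        + re (conj (c ^ 2) * ⟪(T ^ 2 * (star T * T + T * star T)
            + (star T * T + T * star T) * T ^ 2) x, x⟫) / 8
        + ‖(star T * T + T * star T) x‖ ^ 2 / 16 := by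
  set P := star T * T + T * star T
  set R := reOp (c ^ 2 • T ^ 2)
  have hcross : re ⟪R x, P x⟫ = re (conj (c ^ 2) * ⟪(T ^ 2 * P + P * T ^ 2) x, x⟫) / 2 := by
    rw [re_inner_reOp_apply_apply _ (isSelfAdjoint_star_mul_self_add_mul_star T),
      smul_mul_assoc, mul_smul_comm, ← smul_add, smul_apply, inner_smul_left]
  have hre : re (conj (2 : ℂ)⁻¹ * ((4 : ℂ)⁻¹ * ⟪R x, P x⟫)) = re ⟪R x, P x⟫ / 8 := by
    rw [map_inv₀, map_ofNat, ← mul_assoc, ← mul_inv, inv_mul_eq_div]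
    norm_num
  rw [reOp_smul_mul_self T hc, add_apply, smul_apply, smul_apply, @norm_add_sq ℂ, norm_smul,
    norm_smul, inner_smul_left, inner_smul_right, RCLike.re_to_complex, hre, hcross, norm_inv,
    norm_inv, Complex.norm_ofNat, Complex.norm_ofNat]
  ring

lemma lowerC_sq_add_crawford_add_norm_sq_le_numRadius_pow_four (T : E →L[ℂ] E) {x : E}
    (hx : ‖x‖ = 1) :
    1 / 4 * lowerC (T ^ 2) ^ 2
        + 1 / 8 * crawford (T ^ 2 * (star T * T + T * star T)
            + (star T * T + T * star T) * T ^ 2)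
        + 1 / 16 * ‖(star T * T + T * star T) x‖ ^ 2 ≤ numRadius T ^ 4 := by
  set S := T ^ 2 * (star T * T + T * star T) + (star T * T + T * star T) * T ^ 2
  set z := ⟪S x, x⟫
  set c := exp ((z.arg / 2 : ℝ) * I)
  set K := reOp (c • T)
  have hc : ‖c‖ = 1 := norm_exp_ofReal_mul_I _
  have hc2 : c ^ 2 = exp (z.arg * I) := by
    rw [← Complex.exp_nat_mul]; push_cast; ring_nf
  have hz : re (conj (c ^ 2) * z) = ‖z‖ := by
    rw [hc2, conj_exp_arg_mul_I_mul_self, ofReal_re]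
  have hKx : ‖(K * K) x‖ ≤ numRadius T ^ 2 :=
    calc ‖(K * K) x‖ ≤ ‖K * K‖ := by simpa [hx] using (K * K).le_opNorm x
      _ ≤ ‖K‖ * ‖K‖ := norm_mul_le _ _
      _ ≤ numRadius T * numRadius T :=
        mul_le_mul (norm_reOp_smul_le_numRadius T hc) (norm_reOp_smul_le_numRadius T hc)
          (norm_nonneg _) (numRadius_nonneg T)
      _ = numRadius T ^ 2 := (sq _).symm
  have hC : lowerC (T ^ 2) ≤ ‖reOp (c ^ 2 • T ^ 2) x‖ := by
    simpa [hc2] using lowerC_le_norm_reOp (T ^ 2) hx z.arg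
  have hm : crawford S ≤ ‖z‖ := crawford_le_norm_inner S hx
  have hC2 := pow_le_pow_left₀ (lowerC_nonneg _) hC 2
  have hKx2 := pow_le_pow_left₀ (norm_nonneg _) hKx 2
  have hsq := norm_reOp_smul_mul_self_apply_sq T hc x
  rw [hz] at hsq
  linarith

end

theorem stmt8 (T : H →L[ℂ] H) :
    numRadius T ^ 4 ≥
      (1/4) * lowerC (T ^ 2) ^ 2
        + (1/8) * crawford (T ^ 2 * (star T * T + T * star T)
            + (star T * T + T * star T) * T ^ 2)
        + (1/16) * ‖star T * T + T * star T‖ ^ 2 := by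
  rcases subsingleton_or_nontrivial H with hH | hH
  · -- No unit vectors: all three extrema are taken over `∅`, where `sSup` and `sInf` are `0`.
    have hsphere : ∀ x : H, ‖x‖ ≠ 1 := by simp [Subsingleton.elim _ (0 : H)]
    simp [numRadius, crawford, lowerC, hsphere, Subsingleton.elim _ (0 : H →L[ℂ] H)]
  · set P := star T * T + T * star T
    set A := (1/4) * lowerC (T ^ 2) ^ 2 + (1/8) * crawford (T ^ 2 * P + P * T ^ 2) with hA
    have hP : ‖P‖ ^ 2 ≤ 16 * (numRadius T ^ 4 - A) :=
      sq_opNorm_le_of_unit_norm_sq fun x hx => by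
        linarith [lowerC_sq_add_crawford_add_norm_sq_le_numRadius_pow_four T hx, hA]
    linarith
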